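/- arXiv:0901.3912 — 3 statements merged into one kernel-verified Lean document; each statement's English description precedes it below -/
import Mathlib

section
/- Let ℓ be a positive integer and let G be a bipartite graph with finite parts A and B (both nonempty) having at least |A|·|B|/ℓ edges. Then there exist subsets A' ⊆ A and B' ⊆ B with |A'| ≥ ⌊|A|/ℓ⌋ and |B'| ≥ 2^{−|A|}·|B| such that every vertex of A' is adjacent to every vertex of B' (i.e., A' and B' span a complete bipartite subgraph of G). -/
/-!
Let `m = ⌊|A|/ℓ⌋`, so that the degrees `d(b) = |N(b)|` of the vertices `b ∈ B` sum to at least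
`m·|B|`. A set with `d` elements has at least `d - m + 1` subsets of size at least `m` (one of each
size `m, …, d`), so the pairs `(S, b)` with `|S| ≥ m` and `S ⊆ N(b)` number at least
`∑ (d(b) - m + 1) ≥ |B|`. Since there are at most `2^|A|` such `S`, one of them lies in the
common neighbourhood of at least `2^(-|A|)·|B|` vertices of `B`; take it as `A'`.
-/

open Finset

namespace Finset

variable {α β : Type*}

theorem card_add_one_le_card_powerset_filter_le_card_add (s : Finset α) (m : ℕ) :
    #s + 1 ≤ #{t ∈ s.powerset | m ≤ #t} + m := by
  have hsurj :
      Set.SurjOn card (({t ∈ s.powerset | m ≤ #t} : Finset _) : Set (Finset α)) ↑(Icc m #s) := by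
    intro k hk
    rw [coe_Icc, Set.mem_Icc] at hk
    obtain ⟨t, hts, rfl⟩ := exists_subset_card_eq hk.2
    exact ⟨t, by simpa [hts] using hk.1, rfl⟩
  have := card_le_card_of_surjOn card hsurj
  rw [Nat.card_Icc] at this
  omega

theorem card_eq_sum_card_bipartiteBelow [DecidableEq α] [DecidableEq β] {A : Finset α}
    {B : Finset β} {E : Finset (α × β)} (hE : E ⊆ A ×ˢ B) :
    #E = ∑ b ∈ B, #(A.bipartiteBelow (fun a b ↦ (a, b) ∈ E) b) := by
  have hE_filter : #E = #{p ∈ A ×ˢ B | p ∈ E} := by rw [filter_mem_eq_inter, inter_eq_right.2 hE]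
  rw [hE_filter, card_filter, sum_product_right]
  simp only [bipartiteBelow, card_filter]

variable (r : α → β → Prop) [∀ a b, Decidable (r a b)]

theorem card_le_sum_card_filter_forall_mem (A : Finset α) (B : Finset β) (m : ℕ)
    (h : m * #B ≤ ∑ b ∈ B, #(A.bipartiteBelow r b)) :
    #B ≤ ∑ S ∈ A.powerset with m ≤ #S, #{b ∈ B | ∀ a ∈ S, r a b} := by
  classical
  have hdeg := sum_le_sum fun b (_ : b ∈ B) ↦
    card_add_one_le_card_powerset_filter_le_card_add (A.bipartiteBelow r b) m
  rw [sum_add_distrib, sum_add_distrib, sum_const, sum_const, smul_eq_mul, smul_eq_mul,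
    mul_one, mul_comm] at hdeg
  calc #B ≤ ∑ b ∈ B, #{S ∈ (A.bipartiteBelow r b).powerset | m ≤ #S} := by omega
    _ = ∑ b ∈ B, #(bipartiteBelow (fun S b ↦ ∀ a ∈ S, r a b) {S ∈ A.powerset | m ≤ #S} b) := by
      refine sum_congr rfl fun b _ ↦ congrArg card (ext fun S ↦ ?_)
      simp only [bipartiteBelow, mem_filter, mem_powerset, subset_iff]
      grind
    _ = _ := (sum_card_bipartiteAbove_eq_sum_card_bipartiteBelow _).symm

theorem exists_subset_le_card_card_le_two_pow_mul_card_filter (A : Finset α) (B : Finset β)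
    {m : ℕ} (hm : m ≤ #A) (h : m * #B ≤ ∑ b ∈ B, #(A.bipartiteBelow r b)) :
    ∃ A' ⊆ A, m ≤ #A' ∧ #B ≤ 2 ^ #A * #{b ∈ B | ∀ a ∈ A', r a b} := by
  have hne : ({S ∈ A.powerset | m ≤ #S} : Finset _).Nonempty := ⟨A, by simp [hm]⟩
  obtain ⟨S, hS, hle⟩ := exists_le_of_sum_le hne (f := fun _ ↦ #B)
    (g := fun S ↦ 2 ^ #A * #{b ∈ B | ∀ a ∈ S, r a b}) (by
      rw [sum_const, smul_eq_mul, ← mul_sum]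
      refine Nat.mul_le_mul ?_ (card_le_sum_card_filter_forall_mem r A B m h)
      exact (card_le_card (filter_subset _ _)).trans (card_powerset A).le)
  rw [mem_filter, mem_powerset] at hS
  exact ⟨S, hS.1, hS.2, hle⟩

end Finset

theorem stmt_2_general {α : Type*} (ℓ : ℕ) (A B : Finset α)
    (E : Finset (α × α)) (hE : E ⊆ A ×ˢ B)
    (hcard : ((A.card : ℝ) * B.card) / ℓ ≤ (E.card : ℝ)) :
    ∃ (A' B' : Finset α), A' ⊆ A ∧ B' ⊆ B ∧
      A.card / ℓ ≤ A'.card ∧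
      (2 : ℝ) ^ (-(A.card : ℝ)) * B.card ≤ (B'.card : ℝ) ∧
      ∀ a ∈ A', ∀ b ∈ B', (a, b) ∈ E := by
  classical
  have hdeg : A.card / ℓ * B.card ≤ ∑ b ∈ B, #(A.bipartiteBelow (fun a b ↦ (a, b) ∈ E) b) := by
    rw [← card_eq_sum_card_bipartiteBelow hE]
    have : ((A.card / ℓ : ℕ) : ℝ) * B.card ≤ E.card :=
      calc ((A.card / ℓ : ℕ) : ℝ) * B.card ≤ (A.card / ℓ : ℝ) * B.card := by
            gcongr; exact Nat.cast_div_le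
        _ = A.card * B.card / ℓ := div_mul_eq_mul_div _ _ _
        _ ≤ E.card := hcard
    exact_mod_cast this
  obtain ⟨A', hA', hA'card, hB'card⟩ :=
    exists_subset_le_card_card_le_two_pow_mul_card_filter _ A B (Nat.div_le_self _ _) hdeg
  refine ⟨A', {b ∈ B | ∀ a ∈ A', (a, b) ∈ E}, hA', filter_subset _ B, hA'card, ?_,
    fun a ha b hb ↦ (mem_filter.1 hb).2 a ha⟩
  rw [Real.rpow_neg zero_le_two, Real.rpow_natCast, inv_mul_le_iff₀ (by positivity)]
  exact_mod_cast hB'card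

/-- Kővári–Sós–Turán-type lemma: a bipartite graph with parts `A`, `B` and at
least `|A|·|B|/ℓ` edges contains a complete bipartite subgraph with one part
`A' ⊆ A` of at least `⌊|A|/ℓ⌋` vertices and the other part `B' ⊆ B` of at
least `2^(−|A|)·|B|` vertices. -/
theorem stmt_2 {α : Type*} [DecidableEq α] (ℓ : ℕ) (hℓ : 1 ≤ ℓ)
    (A B : Finset α) (hA : A.Nonempty) (hB : B.Nonempty) (hAB : Disjoint A B)
    (E : Finset (α × α)) (hE : E ⊆ A ×ˢ B)
    (hcard : ((A.card : ℝ) * B.card) / ℓ ≤ (E.card : ℝ)) :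
    ∃ (A' B' : Finset α), A' ⊆ A ∧ B' ⊆ B ∧
      A.card / ℓ ≤ A'.card ∧
      (2 : ℝ) ^ (-(A.card : ℝ)) * B.card ≤ (B'.card : ℝ) ∧
      ∀ a ∈ A', ∀ b ∈ B', (a, b) ∈ E :=
  stmt_2_general ℓ A B E hE hcard
end

section
/- Let G be a (simple) graph on n vertices with at least ε·n² edges, where ε > 0, and let t be a positive integer with t < ε·n. Then G contains a complete bipartite subgraph K_{s,t} with s = ⌈ε^t · n⌉; that is, there exist a set T of t vertices and a set S of at least ε^t · n vertices such that every vertex of S is adjacent in G to every vertex of T. -/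
open Finset

/-- If a graph `G` on `n` vertices has at least `ε·n²` edges and `t < ε·n`,
then `G` contains a complete bipartite subgraph `K_{s,t}` with
`s = ⌈ε^t·n⌉`: there are a set `T` of `t` vertices and a set `S` of at least
`ε^t·n` vertices such that every vertex of `S` is adjacent to every vertex
of `T`. -/
theorem stmt_3 (n : ℕ) (G : SimpleGraph (Fin n)) [DecidableRel G.Adj]
    (ε : ℝ) (hε : 0 < ε) (hedges : ε * (n : ℝ) ^ 2 ≤ (G.edgeFinset.card : ℝ))
    (t : ℕ) (ht : 1 ≤ t) (htn : (t : ℝ) < ε * n) :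
    ∃ (T S : Finset (Fin n)), T.card = t ∧
      ε ^ t * (n : ℝ) ≤ (S.card : ℝ) ∧
      ∀ s ∈ S, ∀ v ∈ T, G.Adj s v := by
  classical
  have hn : 0 < n := by
    by_contra h
    push_neg at h
    interval_cases n
    · simp at htn; nlinarith [htn, (by exact_mod_cast ht : (1:ℝ) ≤ t)]
  have hn' : (1:ℝ) ≤ n := by exact_mod_cast hn
  -- double counting
  set 𝒯 : Finset (Finset (Fin n)) := Finset.powersetCard t Finset.univ with h𝒯
  set c : Finset (Fin n) → ℕ :=
    fun T => (Finset.univ.filter (fun v => T ⊆ G.neighborFinset v)).card with hc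
  have key : ∑ T ∈ 𝒯, c T = ∑ v : Fin n, (G.degree v).choose t := by
    have : ∀ v : Fin n, 𝒯.filter (fun T => T ⊆ G.neighborFinset v)
        = Finset.powersetCard t (G.neighborFinset v) := by
      intro v
      ext T
      simp only [h𝒯, Finset.mem_filter, Finset.mem_powersetCard]
      constructor
      · rintro ⟨⟨-, h2⟩, h3⟩; exact ⟨h3, h2⟩
      · rintro ⟨h1, h2⟩; exact ⟨⟨Finset.subset_univ _, h2⟩, h1⟩
    simp only [hc, Finset.card_filter]
    rw [Finset.sum_comm]
    refine Finset.sum_congr rfl fun v _ => ?_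
    rw [← Finset.card_filter, this v, Finset.card_powersetCard,
      SimpleGraph.card_neighborFinset_eq_degree]
  -- real-valued lower bound on the degree-choose sum
  set f : Fin n → ℝ := fun v => max ((G.degree v : ℝ) - (t - 1)) 0 with hf
  have hfc : ∀ v, f v = ((G.degree v + 1 - t : ℕ) : ℝ) := by
    intro v
    simp only [hf]
    rcases le_or_gt t (G.degree v + 1) with h | h
    · have h' : (t:ℝ) ≤ (G.degree v : ℝ) + 1 := by exact_mod_cast h
      rw [Nat.cast_sub h, max_eq_left (by push_cast; linarith)]
      push_cast; ring
    · have h0 : G.degree v + 1 - t = 0 := by omega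
      have hlt : (G.degree v : ℝ) + 1 ≤ t := by exact_mod_cast Nat.le_of_lt h
      rw [h0, max_eq_right (by linarith)]
      simp
  have hft : ∀ v, f v ^ t ≤ (t.factorial : ℝ) * ((G.degree v).choose t : ℝ) := by
    intro v
    rw [hfc v, ← Nat.cast_pow]
    have h1 : (G.degree v + 1 - t) ^ t ≤ (G.degree v).descFactorial t :=
      Nat.pow_sub_le_descFactorial _ _
    have h2 : (G.degree v).descFactorial t = t.factorial * (G.degree v).choose t :=
      Nat.descFactorial_eq_factorial_mul_choose _ _
    exact_mod_cast h1.trans_eq h2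
  have hsumf : ε * (n:ℝ) ^ 2 ≤ ∑ v : Fin n, f v := by
    have h1 : ∀ v : Fin n, (G.degree v : ℝ) - (t - 1) ≤ f v := fun v => le_max_left _ _
    have h2 : ∑ v : Fin n, ((G.degree v : ℝ) - (t - 1)) ≤ ∑ v : Fin n, f v :=
      Finset.sum_le_sum fun v _ => h1 v
    have h3 : ∑ v : Fin n, ((G.degree v : ℝ) - (t - 1))
        = (2 * G.edgeFinset.card : ℕ) - n * ((t:ℝ) - 1) := by
      rw [Finset.sum_sub_distrib, Finset.sum_const, ← Nat.cast_sum, G.sum_degrees_eq_twice_card_edges]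
      simp [Finset.card_univ, nsmul_eq_mul]
    have h4 : (n:ℝ) * t ≤ ε * n ^ 2 := by nlinarith
    have h5 : (2:ℝ) * ε * n ^ 2 ≤ (2 * G.edgeFinset.card : ℕ) := by push_cast; linarith
    nlinarith
  have hjensen : ε ^ t * (n:ℝ) ^ (t + 1) ≤ ∑ v : Fin n, f v ^ t := by
    obtain ⟨k, rfl⟩ : ∃ k, t = k + 1 := ⟨t - 1, by omega⟩
    have hpos : (0:ℝ) < (n:ℝ) ^ k := by positivity
    have hJ := pow_sum_div_card_le_sum_pow (s := Finset.univ)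
      (f := f) (fun v _ => le_max_right _ _) k
    rw [Finset.card_univ, Fintype.card_fin] at hJ
    have h1 : (ε * n ^ 2) ^ (k + 1) ≤ (∑ v : Fin n, f v) ^ (k + 1) :=
      pow_le_pow_left₀ (by positivity) hsumf _
    have h2 : (ε * (n:ℝ) ^ 2) ^ (k + 1) / (n:ℝ) ^ k = ε ^ (k+1) * (n:ℝ) ^ (k + 1 + 1) := by
      rw [mul_pow, ← pow_mul]
      rw [eq_comm, eq_div_iff (ne_of_gt hpos), mul_assoc, ← pow_add]
      congr 2
      omega
    calc ε ^ (k+1) * (n:ℝ) ^ (k + 1 + 1) = (ε * n ^ 2) ^ (k + 1) / (n:ℝ) ^ k := h2.symm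
      _ ≤ (∑ v : Fin n, f v) ^ (k + 1) / (n:ℝ) ^ k := by gcongr
      _ ≤ ∑ v : Fin n, f v ^ (k + 1) := hJ
  have hchoose : ε ^ t * (n:ℝ) ^ (t + 1) / t.factorial ≤ (∑ v : Fin n, (G.degree v).choose t : ℕ) := by
    have h1 : ∑ v : Fin n, f v ^ t ≤ (t.factorial : ℝ) * (∑ v : Fin n, (G.degree v).choose t : ℕ) := by
      push_cast
      rw [Finset.mul_sum]
      exact Finset.sum_le_sum fun v _ => hft v
    have hfac : (0:ℝ) < t.factorial := by exact_mod_cast t.factorial_pos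
    rw [div_le_iff₀ hfac]
    calc ε ^ t * (n:ℝ) ^ (t + 1) ≤ ∑ v : Fin n, f v ^ t := hjensen
      _ ≤ _ := h1
    |>.trans_eq (mul_comm _ _)
  -- t ≤ n
  have htle : t ≤ n := by
    by_contra h
    push_neg at h
    have : ∀ v : Fin n, (G.degree v).choose t = 0 := by
      intro v
      apply Nat.choose_eq_zero_of_lt
      calc G.degree v ≤ n := by
            rw [← SimpleGraph.card_neighborFinset_eq_degree]
            simpa using Finset.card_le_card (Finset.subset_univ (G.neighborFinset v))
        _ < t := h
    rw [Finset.sum_congr rfl (fun v _ => this v)] at hchoose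
    simp at hchoose
    have : (0:ℝ) < ε ^ t * (n:ℝ) ^ (t + 1) / t.factorial := by positivity
    linarith
  -- pigeonhole
  have h𝒯card : (𝒯.card : ℝ) ≤ (n:ℝ) ^ t / t.factorial := by
    have h1 : 𝒯.card = n.choose t := by
      rw [h𝒯, Finset.card_powersetCard, Finset.card_univ, Fintype.card_fin]
    have h2 : t.factorial * n.choose t ≤ n ^ t :=
      (Nat.descFactorial_eq_factorial_mul_choose n t).symm.trans_le (Nat.descFactorial_le_pow n t)
    have hfac : (0:ℝ) < t.factorial := by exact_mod_cast t.factorial_pos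
    rw [h1, le_div_iff₀ hfac]
    exact_mod_cast (mul_comm (t.factorial) (n.choose t) ▸ h2)
  have h𝒯ne : 𝒯.Nonempty := by
    rw [h𝒯, Finset.powersetCard_nonempty]
    simpa using htle
  have hpigeon : ∃ T ∈ 𝒯, ε ^ t * (n:ℝ) ≤ (c T : ℝ) := by
    have hsum : ∑ T ∈ 𝒯, (ε ^ t * (n:ℝ)) ≤ ∑ T ∈ 𝒯, (c T : ℝ) := by
      rw [Finset.sum_const, nsmul_eq_mul]
      have h1 : (∑ T ∈ 𝒯, (c T : ℝ)) = (∑ v : Fin n, (G.degree v).choose t : ℕ) := by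
        push_cast [← key]; rfl
      rw [h1]
      calc (𝒯.card : ℝ) * (ε ^ t * n) ≤ ((n:ℝ) ^ t / t.factorial) * (ε ^ t * n) := by
            apply mul_le_mul_of_nonneg_right h𝒯card (by positivity)
        _ = ε ^ t * (n:ℝ) ^ (t + 1) / t.factorial := by rw [pow_succ]; ring
        _ ≤ _ := hchoose
    exact Finset.exists_le_of_sum_le h𝒯ne hsum
  obtain ⟨T, hT𝒯, hTbound⟩ := hpigeon
  refine ⟨T, Finset.univ.filter (fun v => T ⊆ G.neighborFinset v), ?_, hTbound, ?_⟩
  · exact (Finset.mem_powersetCard.mp hT𝒯).2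
  · intro s hs v hv
    rw [Finset.mem_filter] at hs
    exact (SimpleGraph.mem_neighborFinset _ _ _).mp (hs.2 hv)
end

section
/- For every integer ℓ ≥ 2 and every real ε > 0 there exist C > 0 and N₀ such that for every integer N ≥ N₀ there exists a coloring of the 3-element subsets of an N-element set V with ℓ colors with the following property: for every subset S ⊆ V with |S| ≥ C·√(log₂ N) and every color χ₀, at most (1/ℓ + ε)·C(|S|, 3) of the 3-element subsets of S are colored χ₀. Consequently, the bound c·√(log N) in the almost-monochromatic subset theorem is tight up to the constant factor. -/
/-!
Colour every subset of `Fin N` independently and uniformly with `ℓ` colours. For a fixed `k`-set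
`K` and colour `c`, the number of triples of `K` coloured `c` is binomial with `C(k,3)` trials and
mean `C(k,3)/ℓ`; the exponential-moment (Chernoff) bound makes exceeding `(1/ℓ + ε)·C(k,3)` cost a
factor `exp(-Ω(ε² k³))`, which beats the `ℓ·C(N,k) ≤ N^(k+1)` pairs `(K, c)` of the union bound
once `k ≥ C·√(log N)`. So some colouring is good on every `k`-set, and averaging over the
`k`-subsets of a larger set `S` transfers the bound to `S`.
-/

open Finset Real

section Chernoff

variable {I κ : Type*} [Fintype I] [DecidableEq I] [Fintype κ] [DecidableEq κ]

theorem sum_one_add_pow_card_filter_eq (T : Finset I) (c : κ) (t : ℝ) :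
    ∑ χ : I → κ, (1 + t) ^ #{i ∈ T | χ i = c}
      = (Fintype.card κ + t) ^ #T * (Fintype.card κ : ℝ) ^ (Fintype.card I - #T) := by
  have hfactor : ∀ χ : I → κ,
      (1 + t) ^ #{i ∈ T | χ i = c} = ∏ i, if i ∈ T ∧ χ i = c then 1 + t else 1 := by
    intro χ
    rw [prod_ite, prod_const, prod_const_one, mul_one]
    congr 2
    ext i
    simp
  have hfiber : ∀ i, ∑ d : κ, (if i ∈ T ∧ d = c then 1 + t else 1)
      = if i ∈ T then (Fintype.card κ + t : ℝ) else Fintype.card κ := by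
    intro i
    by_cases hi : i ∈ T
    · have hsplit : ∀ d : κ,
          (if i ∈ T ∧ d = c then 1 + t else 1) = (if d = c then t else 0) + 1 := by
        intro d
        by_cases hd : d = c <;> simp [hi, hd, add_comm]
      rw [sum_congr rfl fun d _ => hsplit d, sum_add_distrib, sum_ite_eq', if_pos (mem_univ c)]
      simp [hi, add_comm]
    · simp [hi]
  simp_rw [hfactor]
  rw [← Fintype.prod_sum (fun i d => if i ∈ T ∧ d = c then 1 + t else 1)]
  simp_rw [hfiber]
  rw [prod_ite, prod_const, prod_const, filter_mem_eq_inter, univ_inter, filter_not,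
    filter_mem_eq_inter, univ_inter, card_univ_sdiff]

theorem card_filter_lt_card_filter_le [Nonempty κ] (T : Finset I) (c : κ) {t : ℝ} (ht : 0 ≤ t)
    (a : ℝ) :
    (#{χ : I → κ | a < #{i ∈ T | χ i = c}} : ℝ)
      ≤ (Fintype.card κ : ℝ) ^ Fintype.card I * (1 + t / Fintype.card κ) ^ #T / (1 + t) ^ a := by
  have hq : (0 : ℝ) < Fintype.card κ := by exact_mod_cast Fintype.card_pos
  have hmgf : ∑ χ : I → κ, (1 + t) ^ #{i ∈ T | χ i = c}
      = (Fintype.card κ : ℝ) ^ Fintype.card I * (1 + t / Fintype.card κ) ^ #T := by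
    have hfactor : (Fintype.card κ + t : ℝ) = Fintype.card κ * (1 + t / Fintype.card κ) := by
      field_simp
    rw [sum_one_add_pow_card_filter_eq, hfactor, mul_pow, mul_right_comm, ← pow_add,
      Nat.add_sub_cancel' (card_le_univ T)]
  rw [le_div_iff₀ (by positivity), ← hmgf]
  calc (#{χ : I → κ | a < #{i ∈ T | χ i = c}} : ℝ) * (1 + t) ^ a
      = ∑ χ : I → κ with a < #{i ∈ T | χ i = c}, (1 + t) ^ a := by
        rw [sum_const, nsmul_eq_mul]
    _ ≤ ∑ χ : I → κ with a < #{i ∈ T | χ i = c}, (1 + t) ^ #{i ∈ T | χ i = c} := by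
        refine sum_le_sum fun χ hχ => ?_
        rw [← rpow_natCast]
        exact rpow_le_rpow_of_exponent_le (by linarith) (mem_filter.1 hχ).2.le
    _ ≤ ∑ χ : I → κ, (1 + t) ^ #{i ∈ T | χ i = c} :=
        sum_le_sum_of_subset_of_nonneg (filter_subset _ _) fun _ _ _ => by positivity

end Chernoff

theorem exists_forall_not_of_sum_card_lt {α ι : Type*} [Fintype α] (P : Finset ι)
    (bad : ι → α → Prop) [∀ i, DecidablePred (bad i)]
    (h : ∑ i ∈ P, #{x | bad i x} < Fintype.card α) : ∃ x, ∀ i ∈ P, ¬ bad i x := by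
  classical
  by_contra! hcover
  have hsub : (univ : Finset α) ⊆ P.biUnion fun i => {x | bad i x} := fun x _ => by
    obtain ⟨i, hi, hx⟩ := hcover x
    exact mem_biUnion.2 ⟨i, hi, by simpa using hx⟩
  exact ((card_le_card hsub).trans card_biUnion_le).not_gt (by simpa using h)

theorem exists_coloring_forall_card_filter_le {V κ : Type*} [Fintype V] [DecidableEq V]
    [Fintype κ] [DecidableEq κ] [Nonempty κ] (r k : ℕ) {t : ℝ} (ht : 0 ≤ t) (a : ℝ)
    (h : Fintype.card κ * (Fintype.card V).choose k * (1 + t / Fintype.card κ) ^ k.choose r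
      < (1 + t) ^ a) :
    ∃ χ : Finset V → κ, ∀ K : Finset V, #K = k → ∀ c,
      (#{T ∈ K.powersetCard r | χ T = c} : ℝ) ≤ a := by
  set q := Fintype.card κ
  set E := Fintype.card (Finset V)
  set B := (q : ℝ) ^ E * (1 + t / q) ^ k.choose r / (1 + t) ^ a
  have hbad : ∀ K ∈ univ.powersetCard k, ∀ c : κ,
      (#{χ : Finset V → κ | a < #{T ∈ K.powersetCard r | χ T = c}} : ℝ) ≤ B := by
    intro K hK c
    have hK : #K = k := (mem_powersetCard.1 hK).2
    have := card_filter_lt_card_filter_le (K.powersetCard r) c ht a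
    rwa [card_powersetCard, hK] at this
  refine (exists_forall_not_of_sum_card_lt (univ.powersetCard k ×ˢ univ)
    (fun (Kc : Finset V × κ) (χ : Finset V → κ) => a < #{T ∈ Kc.1.powersetCard r | χ T = Kc.2})
    ?_).imp fun χ hχ K hK c => not_lt.1 (hχ (K, c) (by simp [hK]))
  rw [← Nat.cast_lt (α := ℝ), Nat.cast_sum]
  calc ∑ Kc ∈ univ.powersetCard k ×ˢ univ,
        (#{χ : Finset V → κ | a < #{T ∈ Kc.1.powersetCard r | χ T = Kc.2}} : ℝ)
      ≤ ∑ _Kc ∈ univ.powersetCard k ×ˢ (univ : Finset κ), B :=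
        sum_le_sum fun Kc hKc => hbad Kc.1 (mem_product.1 hKc).1 Kc.2
    _ = q * (Fintype.card V).choose k * (1 + t / q) ^ k.choose r / (1 + t) ^ a * q ^ E := by
        simp only [sum_const, card_product, card_powersetCard, card_univ, nsmul_eq_mul, B]
        push_cast
        ring
    _ < 1 * q ^ E := by
        gcongr
        exact (div_lt_one (by positivity)).2 h
    _ = Fintype.card (Finset V → κ) := by simp [E, q]

theorem card_filter_powersetCard_mul_choose_eq_sum {α : Type*} [DecidableEq α] {S : Finset α}
    {r k : ℕ} (hrk : r ≤ k) (P : Finset α → Prop) [DecidablePred P] :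
    #{T ∈ S.powersetCard r | P T} * (#S - r).choose (k - r)
      = ∑ K ∈ S.powersetCard k, #{T ∈ K.powersetCard r | P T} := by
  have hsupersets : ∀ T ∈ {T ∈ S.powersetCard r | P T},
      #((S.powersetCard k).bipartiteAbove (· ⊆ ·) T) = (#S - r).choose (k - r) := by
    intro T hT
    obtain ⟨hTS, hTr⟩ := mem_powersetCard.1 (mem_filter.1 hT).1
    rw [bipartiteAbove, card_filter_powersetCard_subset T S k hTS (hTr ▸ hrk), hTr]
  have hsubsets : ∀ K ∈ S.powersetCard k,
      {T ∈ S.powersetCard r | P T}.bipartiteBelow (· ⊆ ·) K = {T ∈ K.powersetCard r | P T} := by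
    intro K hK
    ext T
    simp only [bipartiteBelow, mem_filter, mem_powersetCard]
    exact ⟨fun ⟨⟨⟨_, hTr⟩, hP⟩, hTK⟩ => ⟨⟨hTK, hTr⟩, hP⟩,
      fun ⟨⟨hTK, hTr⟩, hP⟩ => ⟨⟨⟨hTK.trans (mem_powersetCard.1 hK).1, hTr⟩, hP⟩, hTK⟩⟩
  rw [← smul_eq_mul, ← sum_const, ← sum_congr rfl hsupersets,
    sum_card_bipartiteAbove_eq_sum_card_bipartiteBelow]
  exact sum_congr rfl fun K hK => by rw [hsubsets K hK]

theorem card_filter_powersetCard_le_of_forall_subset {α : Type*} [DecidableEq α] {S : Finset α}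
    {r k : ℕ} (hrk : r ≤ k) (hkS : k ≤ #S) (P : Finset α → Prop) [DecidablePred P] (c : ℝ)
    (h : ∀ K ∈ S.powersetCard k, (#{T ∈ K.powersetCard r | P T} : ℝ) ≤ c * k.choose r) :
    (#{T ∈ S.powersetCard r | P T} : ℝ) ≤ c * (#S).choose r := by
  have hpos : (0 : ℝ) < (#S - r).choose (k - r) := by exact_mod_cast Nat.choose_pos (by omega)
  refine le_of_mul_le_mul_right ?_ hpos
  calc (#{T ∈ S.powersetCard r | P T} : ℝ) * (#S - r).choose (k - r)
      = ∑ K ∈ S.powersetCard k, (#{T ∈ K.powersetCard r | P T} : ℝ) := by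
        exact_mod_cast card_filter_powersetCard_mul_choose_eq_sum hrk P
    _ ≤ ∑ _K ∈ S.powersetCard k, c * k.choose r := sum_le_sum h
    _ = c * ((#S).choose k * k.choose r : ℕ) := by
        rw [sum_const, card_powersetCard, nsmul_eq_mul]
        push_cast
        ring
    _ = c * (#S).choose r * (#S - r).choose (k - r) := by
        rw [Nat.choose_mul hrk]
        push_cast
        ring

theorem sq_div_two_le_mul_log_sub_log {p ε : ℝ} (hp0 : 0 ≤ p) (hp : p ≤ 1 / 2) (hε0 : 0 ≤ ε)
    (hε : ε ≤ 1 / 2) : ε ^ 2 / 2 ≤ (p + ε) * log (1 + ε) - log (1 + ε * p) := by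
  have hupper : log (1 + ε * p) ≤ ε * p := by
    linarith [log_le_sub_one_of_pos (show 0 < 1 + ε * p by positivity)]
  have hlower : 2 * ε / (ε + 2) ≤ log (1 + ε) := le_log_one_add_of_nonneg hε0
  have hgap : ε ^ 2 / 2 + ε * p ≤ (p + ε) * (2 * ε / (ε + 2)) := by
    rw [mul_div_assoc', le_div_iff₀ (by positivity)]
    nlinarith [mul_nonneg (sq_nonneg ε) (show 0 ≤ 1 - p - ε / 2 by linarith)]
  nlinarith [mul_le_mul_of_nonneg_left hlower (by positivity : 0 ≤ p + ε)]

theorem cube_le_mul_choose_three {k : ℕ} (hk : 4 ≤ k) : (k : ℝ) ^ 3 ≤ 48 * k.choose 3 := by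
  have hchoose : ((k + 1 - 3 : ℕ) ^ 3 : ℝ) / Nat.factorial 3 ≤ k.choose 3 := Nat.pow_le_choose 3 k
  have hk2 : ((k + 1 - 3 : ℕ) : ℝ) = k - 2 := by
    rw [show k + 1 - 3 = k - 2 by omega, Nat.cast_sub (by omega)]
    norm_num
  rw [hk2, Nat.factorial, Nat.factorial_two] at hchoose
  have hk4 : (4 : ℝ) ≤ k := by exact_mod_cast hk
  have hhalf : ((k : ℝ) / 2) ^ 3 ≤ (k - 2) ^ 3 := pow_le_pow_left₀ (by positivity) (by linarith) 3
  push_cast at hchoose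
  nlinarith

theorem forty_eight_le_of_mul_sqrt_logb_le {N k : ℕ} {ε : ℝ} (hN : 2 ≤ N) (hε0 : 0 < ε)
    (hε : ε ≤ 1 / 2) (hk : 24 / ε * √(logb 2 N) ≤ k) : 48 ≤ (k : ℝ) := by
  have hlogb : 1 ≤ logb 2 N := by
    rw [← logb_self_eq_one one_lt_two]
    exact logb_le_logb_of_le one_lt_two two_pos (by exact_mod_cast hN)
  calc (48 : ℝ) = 48 * 1 := by ring
    _ ≤ 24 / ε * √(logb 2 N) := by
        gcongr
        · rw [le_div_iff₀ hε0]; linarith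
        · exact one_le_sqrt.2 hlogb
    _ ≤ k := hk

theorem pow_mul_one_add_pow_choose_lt_rpow {N k : ℕ} {p ε : ℝ} (hN : 2 ≤ N) (hp0 : 0 ≤ p)
    (hp : p ≤ 1 / 2) (hε0 : 0 < ε) (hε : ε ≤ 1 / 2) (hk : 24 / ε * √(logb 2 N) ≤ k) :
    (N : ℝ) ^ (k + 1) * (1 + ε * p) ^ k.choose 3 < (1 + ε) ^ ((p + ε) * k.choose 3) := by
  set L := log N
  set m : ℕ := k.choose 3
  have hN2 : (2 : ℝ) ≤ N := by exact_mod_cast hN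
  have hL : 0 < L := log_pos (by linarith : (1 : ℝ) < N)
  have hLlogb : L ≤ logb 2 N :=
    le_div_self hL.le (log_pos one_lt_two) (by linarith [log_two_lt_d9])
  have hk48 := forty_eight_le_of_mul_sqrt_logb_le hN hε0 hε hk
  have hkL : 576 * L ≤ ε ^ 2 * k ^ 2 := by
    have hεk : 24 * √(logb 2 N) ≤ ε * k := by
      rwa [div_mul_eq_mul_div, div_le_iff₀ hε0, mul_comm (k : ℝ)] at hk
    have := pow_le_pow_left₀ (by positivity) hεk 2
    rw [mul_pow, sq_sqrt (by linarith)] at this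
    nlinarith
  have hm : (k : ℝ) ^ 3 ≤ 48 * m :=
    cube_le_mul_choose_three (by exact_mod_cast (by linarith : (4 : ℝ) ≤ k))
  have hexponent := sq_div_two_le_mul_log_sub_log hp0 hp hε0.le hε
  -- `C = 24/ε` is chosen so that `ε²k² ≥ 576 log N`, whence `ε²/2 · C(k,3) ≥ 6 k log N`.
  have hkey : (k + 1) * L < m * ((p + ε) * log (1 + ε) - log (1 + ε * p)) := calc
    (k + 1) * L < 6 * k * L := by nlinarith
    _ = k * (576 * L) / 96 := by ring
    _ ≤ k * (ε ^ 2 * k ^ 2) / 96 := by gcongr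
    _ = ε ^ 2 / 2 * (k ^ 3 / 48) := by ring
    _ ≤ ε ^ 2 / 2 * m := by gcongr; linarith
    _ ≤ m * ((p + ε) * log (1 + ε) - log (1 + ε * p)) := by
        rw [mul_comm]; gcongr
  rw [← log_lt_log_iff (by positivity) (by positivity), log_mul (by positivity) (by positivity),
    log_pow, log_pow, log_rpow (by linarith)]
  push_cast
  nlinarith

/-- Tightness of the almost-monochromatic subset theorem: for every `ℓ ≥ 2`
and `ε > 0` there are `C > 0` and `N₀` such that for all `N ≥ N₀` there is an
`ℓ`-coloring of the triples of an `N`-element set in which every subset `S`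
with `|S| ≥ C·√(log₂ N)` has at most `(1/ℓ + ε)·C(|S|,3)` triples in each
color. -/
theorem stmt_4 (ℓ : ℕ) (hℓ : 2 ≤ ℓ) (ε : ℝ) (hε : 0 < ε) :
    ∃ (C : ℝ) (N₀ : ℕ), 0 < C ∧ ∀ N : ℕ, N₀ ≤ N →
      ∃ χ : Finset (Fin N) → Fin ℓ,
        ∀ S : Finset (Fin N), C * Real.sqrt (Real.logb 2 N) ≤ (S.card : ℝ) →
          ∀ χ₀ : Fin ℓ,
            (((S.powersetCard 3).filter (fun T => χ T = χ₀)).card : ℝ) ≤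
              (1 / ℓ + ε) * (Nat.choose S.card 3 : ℝ) := by
  have : NeZero ℓ := ⟨by omega⟩
  set δ := min ε (1 / 2)
  have hδ0 : 0 < δ := lt_min hε one_half_pos
  refine ⟨24 / δ, ℓ, by positivity, fun N hN => ?_⟩
  set k := ⌈24 / δ * √(logb 2 N)⌉₊
  have hk : 24 / δ * √(logb 2 N) ≤ k := Nat.le_ceil _
  have hbound : (ℓ : ℝ) * N.choose k * (1 + δ / ℓ) ^ k.choose 3
      < (1 + δ) ^ ((1 / ℓ + δ) * k.choose 3) := calc
    _ ≤ (N : ℝ) ^ (k + 1) * (1 + δ * (1 / ℓ)) ^ k.choose 3 := by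
        rw [pow_succ', ← mul_div_assoc, mul_one]
        gcongr
        exact_mod_cast Nat.choose_le_pow N k
    _ < _ := pow_mul_one_add_pow_choose_lt_rpow (hℓ.trans hN) (by positivity)
        (by rw [one_div_le_one_div (by positivity) two_pos]; exact_mod_cast hℓ) hδ0
        (min_le_right _ _) hk
  obtain ⟨χ, hχ⟩ := exists_coloring_forall_card_filter_le (V := Fin N) (κ := Fin ℓ) 3 k hδ0.le
    ((1 / ℓ + δ) * k.choose 3) (by simpa using hbound)
  refine ⟨χ, fun S hS c => ?_⟩
  have hk48 := forty_eight_le_of_mul_sqrt_logb_le (hℓ.trans hN) hδ0 (min_le_right _ _) hk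
  have hk3 : 3 ≤ k := by exact_mod_cast (by linarith : (3 : ℝ) ≤ k)
  calc _ ≤ (1 / ℓ + δ) * (#S).choose 3 :=
        card_filter_powersetCard_le_of_forall_subset hk3 (Nat.ceil_le.2 hS) _ _
          fun K hK => hχ K (mem_powersetCard.1 hK).2 c
    _ ≤ _ := by gcongr; exact min_le_left _ _
end
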